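/- Let n ≥ 1, p ≥ 1, let f : (Fin n → Fin 2) → ℝ be a cost function and let a be a permutation of Fin n that is a symmetry of f, i.e. f(a·x) = f(x) for all bitstrings x. Let S₁, S₂ ⊆ Fin n be subsets of qubit indices such that S₂ = a(S₁) (the image of S₁ under a). Then for all QAOA parameters β, γ : Fin p → ℝ, the expectations of the Z-product observables Z_{S₁} and Z_{S₂} in the depth-p QAOA state coincide: ⟨β,γ| Z_{S₁} |β,γ⟩ = ⟨β,γ| Z_{S₂} |β,γ⟩. -/

import Mathlib

open scoped Classical
open Matrix

namespace QAOA

/-- Bitstrings on `n` bits: the computational basis index set. -/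
abbrev Bit (n : ℕ) := Fin n → Fin 2

/-- Pauli-Z on qubit `j`: diagonal with entries `(-1)^(x j)`. -/
noncomputable def Zop (n : ℕ) (j : Fin n) : Matrix (Bit n) (Bit n) ℂ :=
  Matrix.diagonal fun x => (-1 : ℂ) ^ (x j : ℕ)

/-- Flip bit `j` of bitstring `x`. -/
def flip {n : ℕ} (x : Bit n) (j : Fin n) : Bit n := Function.update x j (1 - x j)

/-- Pauli-X on qubit `j`. -/
noncomputable def Xop (n : ℕ) (j : Fin n) : Matrix (Bit n) (Bit n) ℂ :=
  Matrix.of fun x y => if y = flip x j then 1 else 0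

/-- The Z-product observable `Z_S = ∏_{j ∈ S} Z_j`. -/
noncomputable def Zprod (n : ℕ) (S : Finset (Fin n)) : Matrix (Bit n) (Bit n) ℂ :=
  (S.toList.map (Zop n)).prod

/-- The mixing Hamiltonian `B = ∑ j, X_j`. -/
noncomputable def mixB (n : ℕ) : Matrix (Bit n) (Bit n) ℂ := ∑ j, Xop n j

/-- The cost Hamiltonian `H(f)`, diagonal with entries `f x`. -/
noncomputable def costH (n : ℕ) (f : Bit n → ℝ) : Matrix (Bit n) (Bit n) ℂ :=
  Matrix.diagonal fun x => (f x : ℂ)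

/-- The uniform superposition `|s⟩`, all entries `2^(-n/2)`. -/
noncomputable def uniform (n : ℕ) : Bit n → ℂ := fun _ => (((2 : ℝ) ^ (-(n : ℝ) / 2) : ℝ) : ℂ)

/-- The depth-`p` QAOA state
`|β,γ⟩ = exp(-i β_p B) exp(-i γ_p H(f)) ⋯ exp(-i β_1 B) exp(-i γ_1 H(f)) |s⟩`. -/
noncomputable def qaoaState (n p : ℕ) (f : Bit n → ℝ) (β γ : Fin p → ℝ) : Bit n → ℂ :=
  ((List.finRange p).map fun k =>
      NormedSpace.exp ((-Complex.I * (β k : ℂ)) • mixB n) *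
      NormedSpace.exp ((-Complex.I * (γ k : ℂ)) • costH n f)).reverse.prod *ᵥ uniform n

/-- The expectation `⟨ψ|M|ψ⟩ = ∑ x, conj (ψ x) * (M ψ) x`. -/
noncomputable def expectation {n : ℕ} (M : Matrix (Bit n) (Bit n) ℂ) (ψ : Bit n → ℂ) : ℂ :=
  ∑ x, star (ψ x) * (M *ᵥ ψ) x

/-- The action of a permutation of qubit indices on bitstrings: `(a·x) j = x (a⁻¹ j)`. -/
def permAct {n : ℕ} (a : Equiv.Perm (Fin n)) (x : Bit n) : Bit n := fun j => x (a⁻¹ j)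

/-- The permutation unitary induced by `a`: `A x y = 1` iff `x = a·y`. -/
noncomputable def permMat {n : ℕ} (a : Equiv.Perm (Fin n)) : Matrix (Bit n) (Bit n) ℂ :=
  Matrix.of fun x y => if x = permAct a y then 1 else 0

/-!
A symmetry `a` of `f` acts on the computational basis by the permutation `x ↦ a·x`. Reindexing by
it fixes `H(f)`, `B` (it only relabels the `X_j`) and `|s⟩`, hence every factor of the QAOA
circuit, so the QAOA state is a fixed point of it. The same reindexing carries `Z_{a(S)}` to
`Z_S`, and an expectation is unchanged when both the observable and the state are reindexed.
-/

theorem _root_.Matrix.exp_submatrix_equiv {m 𝔸 : Type*} [Fintype m] [DecidableEq m] [Ring 𝔸]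
    [TopologicalSpace 𝔸] [IsTopologicalRing 𝔸] [T2Space 𝔸] [Algebra ℚ 𝔸]
    (A : Matrix m m 𝔸) (e : m ≃ m) :
    NormedSpace.exp (A.submatrix e e) = (NormedSpace.exp A).submatrix e e := by
  let φ := Matrix.reindexAlgEquiv ℚ 𝔸 e.symm
  change NormedSpace.exp (φ A) = φ (NormedSpace.exp A)
  rw [NormedSpace.exp_eq_tsum_rat, Function.LeftInverse.map_tsum (g := φ) _
    (continuous_id.matrix_submatrix _ _) (continuous_id.matrix_submatrix _ _) φ.left_inv]
  simp only [map_smul, map_pow]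

theorem _root_.Matrix.list_prod_submatrix_equiv {m α : Type*} [Fintype m] [DecidableEq m]
    [Semiring α] (l : List (Matrix m m α)) (e : m ≃ m) :
    l.prod.submatrix e e = (l.map fun A => A.submatrix e e).prod :=
  map_list_prod (Matrix.reindexAlgEquiv ℕ α e.symm) l

section
variable {n : ℕ}

def permActEquiv (a : Equiv.Perm (Fin n)) : Bit n ≃ Bit n :=
  Equiv.arrowCongr a (Equiv.refl _)

@[simp]
theorem coe_permActEquiv (a : Equiv.Perm (Fin n)) : ⇑(permActEquiv a) = permAct a := rfl

theorem permAct_injective (a : Equiv.Perm (Fin n)) : Function.Injective (permAct a) :=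
  (permActEquiv a).injective

theorem permAct_flip (a : Equiv.Perm (Fin n)) (x : Bit n) (j : Fin n) :
    permAct a (flip x j) = flip (permAct a x) (a j) := by
  funext i
  obtain ⟨i, rfl⟩ := a.surjective i
  simp [permAct, flip, Function.update_apply]

theorem Xop_submatrix_permAct (a : Equiv.Perm (Fin n)) (j : Fin n) :
    (Xop n j).submatrix (permAct a) (permAct a) = Xop n (a⁻¹ j) := by
  ext x y
  have hflip : flip (permAct a x) j = permAct a (flip x (a⁻¹ j)) := by
    simp [permAct_flip]
  simp [Xop, hflip, (permAct_injective a).eq_iff]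

theorem mixB_submatrix_permAct (a : Equiv.Perm (Fin n)) :
    (mixB n).submatrix (permAct a) (permAct a) = mixB n := by
  ext x y
  simp only [mixB, Matrix.submatrix_apply, Matrix.sum_apply]
  change ∑ j, (Xop n j).submatrix (permAct a) (permAct a) x y = _
  simp only [Xop_submatrix_permAct]
  exact Equiv.sum_comp a⁻¹ fun j => Xop n j x y

theorem costH_submatrix_permAct (f : Bit n → ℝ) (a : Equiv.Perm (Fin n))
    (hsym : ∀ x : Bit n, f (permAct a x) = f x) :
    (costH n f).submatrix (permAct a) (permAct a) = costH n f := by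
  rw [costH, ← coe_permActEquiv, Matrix.submatrix_diagonal_equiv]
  simp [Function.comp_def, hsym]

theorem Zprod_eq_diagonal (S : Finset (Fin n)) :
    Zprod n S = Matrix.diagonal fun x => ∏ j ∈ S, (-1 : ℂ) ^ (x j : ℕ) := by
  have : Zop n = Matrix.diagonalRingHom (Bit n) ℂ ∘ fun j x => (-1 : ℂ) ^ (x j : ℕ) := rfl
  rw [Zprod, this, ← List.map_map, ← map_list_prod, Finset.prod_map_toList]
  simp [Finset.prod_apply]

theorem Zprod_image_submatrix_permAct (a : Equiv.Perm (Fin n)) (S : Finset (Fin n)) :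
    (Zprod n (S.image a)).submatrix (permAct a) (permAct a) = Zprod n S := by
  rw [Zprod_eq_diagonal, Zprod_eq_diagonal, ← coe_permActEquiv, Matrix.submatrix_diagonal_equiv]
  congr 1
  funext x
  rw [Function.comp_apply, Finset.prod_image fun i _ j _ h => a.injective h]
  simp [permAct]

theorem expectation_submatrix_equiv (M : Matrix (Bit n) (Bit n) ℂ) (ψ : Bit n → ℂ)
    (e : Bit n ≃ Bit n) : expectation (M.submatrix e e) (ψ ∘ e) = expectation M ψ := by
  simp only [expectation, Matrix.submatrix_mulVec_equiv, Function.comp_def, e.apply_symm_apply]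
  exact e.sum_comp fun x => star (ψ x) * (M *ᵥ ψ) x

noncomputable def qaoaUnitary (n p : ℕ) (f : Bit n → ℝ) (β γ : Fin p → ℝ) :
    Matrix (Bit n) (Bit n) ℂ :=
  ((List.finRange p).map fun k =>
      NormedSpace.exp ((-Complex.I * (β k : ℂ)) • mixB n) *
      NormedSpace.exp ((-Complex.I * (γ k : ℂ)) • costH n f)).reverse.prod

theorem qaoaUnitary_submatrix_permAct (p : ℕ) (f : Bit n → ℝ) (a : Equiv.Perm (Fin n))
    (hsym : ∀ x : Bit n, f (permAct a x) = f x) (β γ : Fin p → ℝ) :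
    (qaoaUnitary n p f β γ).submatrix (permAct a) (permAct a) = qaoaUnitary n p f β γ := by
  rw [qaoaUnitary, ← coe_permActEquiv, Matrix.list_prod_submatrix_equiv, List.map_reverse,
    List.map_map]
  congr 2
  refine List.map_congr_left fun k _ => ?_
  simp only [Function.comp_apply]
  rw [← Matrix.submatrix_mul_equiv _ _ _ (permActEquiv a), ← Matrix.exp_submatrix_equiv,
    ← Matrix.exp_submatrix_equiv]
  simp only [Matrix.submatrix_smul, Pi.smul_apply, coe_permActEquiv, mixB_submatrix_permAct,
    costH_submatrix_permAct f a hsym]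

theorem qaoaState_comp_permAct (p : ℕ) (f : Bit n → ℝ) (a : Equiv.Perm (Fin n))
    (hsym : ∀ x : Bit n, f (permAct a x) = f x) (β γ : Fin p → ℝ) :
    qaoaState n p f β γ ∘ permAct a = qaoaState n p f β γ := by
  have huniform : uniform n ∘ (permActEquiv a).symm = uniform n := rfl
  calc (qaoaUnitary n p f β γ *ᵥ uniform n) ∘ permAct a
      = (qaoaUnitary n p f β γ).submatrix (permAct a) (permAct a) *ᵥ uniform n := by
        rw [← coe_permActEquiv, Matrix.submatrix_mulVec_equiv, huniform]
    _ = qaoaUnitary n p f β γ *ᵥ uniform n := by rw [qaoaUnitary_submatrix_permAct p f a hsym]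
end

theorem qaoa_expectation_eq_of_symmetry_general (n p : ℕ)
    (f : Bit n → ℝ) (a : Equiv.Perm (Fin n))
    (hsym : ∀ x : Bit n, f (permAct a x) = f x)
    (S₁ S₂ : Finset (Fin n)) (hS : S₂ = S₁.image a)
    (β γ : Fin p → ℝ) :
    expectation (Zprod n S₁) (qaoaState n p f β γ) =
      expectation (Zprod n S₂) (qaoaState n p f β γ) := by
  calc expectation (Zprod n S₁) (qaoaState n p f β γ)
      = expectation ((Zprod n S₂).submatrix (permAct a) (permAct a))
          (qaoaState n p f β γ ∘ permAct a) := by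
        rw [hS, Zprod_image_submatrix_permAct, qaoaState_comp_permAct p f a hsym]
    _ = expectation (Zprod n S₂) (qaoaState n p f β γ) :=
        expectation_submatrix_equiv _ _ (permActEquiv a)

/-- If `a` is a variable-permutation symmetry of the cost function `f`
and `S₂ = a(S₁)`, then the QAOA expectations of `Z_{S₁}` and `Z_{S₂}` coincide for
all depths `p ≥ 1` and all parameters. -/
theorem qaoa_expectation_eq_of_symmetry (n p : ℕ) (hn : 1 ≤ n) (hp : 1 ≤ p)
    (f : Bit n → ℝ) (a : Equiv.Perm (Fin n))
    (hsym : ∀ x : Bit n, f (permAct a x) = f x)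
    (S₁ S₂ : Finset (Fin n)) (hS : S₂ = S₁.image a)
    (β γ : Fin p → ℝ) :
    expectation (Zprod n S₁) (qaoaState n p f β γ) =
      expectation (Zprod n S₂) (qaoaState n p f β γ) :=
  qaoa_expectation_eq_of_symmetry_general n p f a hsym S₁ S₂ hS β γ

end QAOA
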